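/- Let n ≥ 2 and let η_n = d_1⋯d_n(10)^∞ be a sequence with d_{n−1}d_n = 01 such that (η_n)_{q_2} has exactly two distinct q_2-expansions. If d_1d_2 = 00, then (0η_n)_{q_2} has exactly two distinct q_2-expansions and (1η_n)_{q_2} does not have exactly two distinct q_2-expansions. -/

import Mathlib

/-!
The expansions of `y / q` are those of `y` preceded by `0` together with those of `y - 1`
preceded by `1`. With `x = (η_n)_{q₂}`, everything therefore follows from `1 + x ≤ 1/(q₂ - 1)`:
then `x - 1 < 0` has no expansion, so `(0η_n)_{q₂} = x/q₂` has exactly the two expansions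
of `x`, while `(1η_n)_{q₂} = (1 + x)/q₂` has those of `x` plus at least one of `1 + x`.

For `n = 3`, `η_3 = 001(10)^∞` and the bound is a computation. For `n ≥ 4`, write
`η_n = 00v01(10)^∞` and `z = (v01(10)^∞)_{q₂}`, so `x = z/q₂²`. The relation
`q₂⁴ = 2q₂² + q₂ + 1` says exactly that `01(10)^∞` and `10000(10)^∞` have the same value, so
`z` has two expansions. Since `z/q₂ < 1`, the expansions of `x` are those of `z` and of `z - 1`
(each preceded by `00`, resp. `01`); so `z - 1` has none, which forces `z < 1` and
`x < 1/q₂²`.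
-/

open Set

/-- The value `∑ dᵢ / qⁱ` (i ≥ 1) of a digit sequence `d` in base `q`
(here `d i` is the digit `d_{i+1}` of the paper). -/
noncomputable def expVal (q : ℝ) (d : ℕ → ℕ) : ℝ := ∑' i : ℕ, (d i : ℝ) / q ^ (i + 1)

/-- The set of `q`-expansions of `x`: 0-1 digit sequences whose value in base `q` is `x`. -/
def expansions (q x : ℝ) : Set (ℕ → ℕ) := {d | (∀ i, d i ≤ 1) ∧ expVal q d = x}

/-- The map `T_{q,s}(x) = qx - s`. -/
def Tmap (q : ℝ) (s : ℕ) (x : ℝ) : ℝ := q * x - s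

/-- `T_{q,d₁⋯dₙ} = T_{q,d₁} ∘ ⋯ ∘ T_{q,dₙ}` (the identity for the empty word). -/
def Tword (q : ℝ) (w : List ℕ) (x : ℝ) : ℝ := w.foldr (fun s y => Tmap q s y) x

/-- The switch region `S_q = [1/q, 1/(q²-q)]`. -/
def switchRegion (q : ℝ) : Set ℝ := Set.Icc (1 / q) (1 / (q ^ 2 - q))

/-- `A₁(q)`: points of the switch region for which both `T_{q,0}(x)` and `T_{q,1}(x)`
have finitely many `q`-expansions. -/
def A1set (q : ℝ) : Set ℝ :=
  {x ∈ switchRegion q | (expansions q (Tmap q 0 x)).Finite ∧ (expansions q (Tmap q 1 x)).Finite}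

/-- `A₂(q)`: points of the switch region for which exactly one of `T_{q,0}(x)`, `T_{q,1}(x)`
has finitely many `q`-expansions. -/
def A2set (q : ℝ) : Set ℝ :=
  {x ∈ switchRegion q | Xor' (expansions q (Tmap q 0 x)).Finite (expansions q (Tmap q 1 x)).Finite}

/-- `A₃(q)`: points of the switch region for which both `T_{q,0}(x)` and `T_{q,1}(x)`
have infinitely many `q`-expansions. -/
def A3set (q : ℝ) : Set ℝ :=
  {x ∈ switchRegion q | (expansions q (Tmap q 0 x)).Infinite ∧ (expansions q (Tmap q 1 x)).Infinite}

/-- `x` is a `q`-null infinite point: it has infinitely many `q`-expansions and every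
branching point of `x` (an image `T_{q,d₁⋯dₙ}(x)` lying in `A₂(q) ∪ A₃(q)`) lies in `A₂(q)`. -/
def IsNullInfinite (q x : ℝ) : Prop :=
  (expansions q x).Infinite ∧
    ∀ w : List ℕ, (∀ s ∈ w, s ≤ 1) →
      Tword q w x ∈ A2set q ∪ A3set q → Tword q w x ∈ A2set q

/-- The interval `J_q = [(q+q²)/(q⁴-1), (1+q³)/(q⁴-1)]`. -/
def Jset (q : ℝ) : Set ℝ := Set.Icc ((q + q ^ 2) / (q ^ 4 - 1)) ((1 + q ^ 3) / (q ^ 4 - 1))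

/-- `B_m` (for a finite `m`): the set of `q ∈ (1,2)` such that some `x ∈ [0, 1/(q-1)]`
has exactly `m` different `q`-expansions. -/
def Bset (m : ℕ) : Set ℝ :=
  {q | q ∈ Set.Ioo (1 : ℝ) 2 ∧
    ∃ x ∈ Set.Icc (0 : ℝ) (1 / (q - 1)), Cardinal.mk ↥(expansions q x) = (m : Cardinal)}

/-- `B_{ℵ₀}`: the set of `q ∈ (1,2)` such that some `x ∈ [0, 1/(q-1)]` has exactly
countably infinitely many different `q`-expansions. -/
def BalephSet : Set ℝ :=
  {q | q ∈ Set.Ioo (1 : ℝ) 2 ∧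
    ∃ x ∈ Set.Icc (0 : ℝ) (1 / (q - 1)), Cardinal.mk ↥(expansions q x) = Cardinal.aleph0}

/-- `U_k`: the set of `x ∈ [0, 1/(q-1)]` having exactly `k` different `q`-expansions. -/
def Uset (q : ℝ) (k : ℕ) : Set ℝ :=
  {x ∈ Set.Icc (0 : ℝ) (1 / (q - 1)) | Cardinal.mk ↥(expansions q x) = (k : Cardinal)}

/-- `ε_k = (01)^k (10)^∞`; in particular `eps 0 = (10)^∞`. -/
def eps (k : ℕ) : ℕ → ℕ := fun i => if i < 2 * k then i % 2 else (i - 2 * k + 1) % 2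

/-- Prepend the digit `s`, repeated `m` times, to the digit sequence `d`. -/
def prep (s m : ℕ) (d : ℕ → ℕ) : ℕ → ℕ := fun i => if i < m then s else d (i - m)

/-- Reflection of a digit sequence: each digit `d` is replaced by `1 - d`. -/
def reflSeq (d : ℕ → ℕ) : ℕ → ℕ := fun i => 1 - d i

/-- Concatenation of a finite word with an infinite digit sequence. -/
def seqCat (w : List ℕ) (t : ℕ → ℕ) : ℕ → ℕ :=
  fun i => if i < w.length then w.getD i 0 else t (i - w.length)

/-- The sets `E_m` of the paper: for odd `m` (`m = 1, 3`),
`E_m = ⋃_{k≥1} {(01^{m+1}ε_k)_q, (10^m ε_k)_q} \ {(10ε₁)_q}`; for even `m` (`m = 2, 4`),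
`E_m = {(01^m(10)^∞)_q} ∪ ⋃_{k≥1} {(01^{m+1}ε_k)_q, (10^m ε_k)_q}`. -/
noncomputable def Eset (q : ℝ) (m : ℕ) : Set ℝ :=
  if m % 2 = 1 then
    (⋃ k : ℕ, {expVal q (prep 0 1 (prep 1 (m + 1) (eps (k + 1)))),
               expVal q (prep 1 1 (prep 0 m (eps (k + 1))))}) \
      {expVal q (prep 1 1 (prep 0 1 (eps 1)))}
  else
    {expVal q (prep 0 1 (prep 1 m (eps 0)))} ∪
      ⋃ k : ℕ, {expVal q (prep 0 1 (prep 1 (m + 1) (eps (k + 1)))),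
                expVal q (prep 1 1 (prep 0 m (eps (k + 1))))}


section ExpVal

variable {q : ℝ} {d : ℕ → ℕ}

lemma summable_digits (hq : 1 < q) (hd : ∀ i, d i ≤ 1) :
    Summable fun i => (d i : ℝ) / q ^ (i + 1) := by
  have hgeom : Summable fun i : ℕ => (1 / q) ^ i / q :=
    (summable_geometric_of_lt_one (by positivity) ((div_lt_one (by linarith)).2 hq)).div_const q
  refine hgeom.of_nonneg_of_le (fun i => by positivity) fun i => ?_
  rw [div_pow, one_pow, div_div, ← pow_succ]
  gcongr
  exact_mod_cast hd i

lemma expVal_nonneg (hq : 0 ≤ q) (d : ℕ → ℕ) : 0 ≤ expVal q d :=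
  tsum_nonneg fun i => by positivity

lemma expVal_le (hq : 1 < q) (hd : ∀ i, d i ≤ 1) : expVal q d ≤ 1 / (q - 1) := by
  have hone : expVal q (fun _ => 1) = 1 / (q - 1) := by
    have h := tsum_geometric_of_lt_one (r := 1 / q) (by positivity)
      ((div_lt_one (by linarith)).2 hq)
    simp only [expVal, Nat.cast_one, one_div_pow, pow_succ, ← div_div, tsum_div_const] at h ⊢
    rw [h]
    field_simp
  rw [← hone]
  exact (summable_digits hq hd).tsum_le_tsum (fun i => by gcongr; exact_mod_cast hd i)
    (summable_digits hq fun _ => le_rfl)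

lemma expVal_prep (hq : 1 < q) (hd : ∀ i, d i ≤ 1) (s : ℕ) :
    expVal q (prep s 1 d) = (s + expVal q d) / q := by
  have hterm : ∀ i,
      (prep s 1 d (i + 1) : ℝ) / q ^ (i + 1 + 1) = (d i : ℝ) / q ^ (i + 1) / q := by
    intro i
    simp [prep, pow_succ _ (i + 1), div_div]
  have hshift : Summable fun i => (prep s 1 d (i + 1) : ℝ) / q ^ (i + 1 + 1) := by
    simp_rw [hterm]
    exact (summable_digits hq hd).div_const q
  rw [expVal, tsum_eq_zero_add' (f := fun i => (prep s 1 d i : ℝ) / q ^ (i + 1)) hshift]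
  simp_rw [hterm]
  rw [tsum_div_const]
  simp [prep, expVal, add_div]

lemma expVal_prep_zero (q : ℝ) (m : ℕ) (d : ℕ → ℕ) :
    expVal q (prep 0 m d) = expVal q d / q ^ m := by
  have hsupp : (Function.support fun i => (prep 0 m d i : ℝ) / q ^ (i + 1)) ⊆
      Set.range (· + m) := by
    intro i hi
    by_cases him : i < m
    · simp [prep, him] at hi
    · exact ⟨i - m, Nat.sub_add_cancel (not_lt.1 him)⟩
  rw [expVal, ← (add_left_injective m).tsum_eq hsupp, expVal, ← tsum_div_const]
  congr 1
  ext i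
  simp [prep, pow_add, div_div, mul_comm, mul_left_comm]

end ExpVal

section Digits

lemma prep_le_one {s : ℕ} (hs : s ≤ 1) {d : ℕ → ℕ} (hd : ∀ i, d i ≤ 1) (m i : ℕ) :
    prep s m d i ≤ 1 := by
  unfold prep
  split_ifs
  exacts [hs, hd _]

lemma prep_injective (s m : ℕ) : Function.Injective (prep s m) := fun a b h =>
  funext fun i => by simpa [prep] using congrFun h (i + m)

lemma prep_head_tail (d : ℕ → ℕ) : prep (d 0) 1 (fun i => d (i + 1)) = d := by
  funext i
  cases i <;> simp [prep]

lemma eps_zero_le_one (i : ℕ) : eps 0 i ≤ 1 := by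
  simp [eps]
  omega

lemma eps_zero_eq_prep : eps 0 = prep 1 1 (prep 0 1 (eps 0)) := by
  funext i
  rcases i with _ | _ | i
  · rfl
  · rfl
  · simp [eps, prep]
    omega

@[simp]
lemma seqCat_nil (t : ℕ → ℕ) : seqCat [] t = t := by
  funext i
  simp [seqCat]

@[simp]
lemma seqCat_cons (a : ℕ) (u : List ℕ) (t : ℕ → ℕ) :
    seqCat (a :: u) t = prep a 1 (seqCat u t) := by
  funext i
  cases i <;> simp [seqCat, prep]

lemma seqCat_append (u v : List ℕ) (t : ℕ → ℕ) :
    seqCat (u ++ v) t = seqCat u (seqCat v t) := by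
  induction u with
  | nil => simp
  | cons a u ih => simp [ih]

lemma seqCat_apply_length (u : List ℕ) (t : ℕ → ℕ) : seqCat u t u.length = t 0 := by
  simp [seqCat]

lemma seqCat_le_one {u : List ℕ} (hu : ∀ s ∈ u, s ≤ 1) {t : ℕ → ℕ} (ht : ∀ i, t i ≤ 1)
    (i : ℕ) : seqCat u t i ≤ 1 := by
  unfold seqCat
  split_ifs with h
  · exact hu _ (List.getD_eq_getElem _ _ h ▸ List.getElem_mem h)
  · exact ht _

lemma expVal_seqCat_congr {q : ℝ} (hq : 1 < q) {u : List ℕ} (hu : ∀ s ∈ u, s ≤ 1)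
    {t₁ t₂ : ℕ → ℕ} (ht₁ : ∀ i, t₁ i ≤ 1) (ht₂ : ∀ i, t₂ i ≤ 1)
    (h : expVal q t₁ = expVal q t₂) :
    expVal q (seqCat u t₁) = expVal q (seqCat u t₂) := by
  induction u with
  | nil => simpa using h
  | cons a u ih =>
    have hu' : ∀ s ∈ u, s ≤ 1 := fun s hs => hu s (List.mem_cons_of_mem a hs)
    rw [seqCat_cons, seqCat_cons, expVal_prep hq (seqCat_le_one hu' ht₁),
      expVal_prep hq (seqCat_le_one hu' ht₂), ih hu']

end Digits

section Expansions

variable {q : ℝ}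

lemma expansions_eq_empty_of_neg (hq : 0 ≤ q) {y : ℝ} (hy : y < 0) : expansions q y = ∅ :=
  Set.eq_empty_of_forall_notMem fun d hd => (expVal_nonneg hq d).not_gt (hd.2 ▸ hy)

lemma expansions_div_eq_union (hq : 1 < q) (y : ℝ) :
    expansions q (y / q) =
      prep 0 1 '' expansions q y ∪ prep 1 1 '' expansions q (y - 1) := by
  have hq0 : q ≠ 0 := by positivity
  ext d
  constructor
  · rintro ⟨hd, hval⟩
    have htail : ∀ i, d (i + 1) ≤ 1 := fun i => hd (i + 1)
    rw [← prep_head_tail d, expVal_prep hq htail, div_left_inj' hq0] at hval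
    rcases Nat.le_one_iff_eq_zero_or_eq_one.1 (hd 0) with h0 | h1
    · refine Or.inl ⟨_, ⟨htail, ?_⟩, h0 ▸ prep_head_tail d⟩
      simpa [h0] using hval
    · refine Or.inr ⟨_, ⟨htail, ?_⟩, h1 ▸ prep_head_tail d⟩
      rw [← hval, h1]
      push_cast
      ring
  · rintro (⟨t, ⟨ht, rfl⟩, rfl⟩ | ⟨t, ⟨ht, htv⟩, rfl⟩)
    · exact ⟨prep_le_one zero_le_one ht 1, by simp [expVal_prep hq ht]⟩
    · exact ⟨prep_le_one le_rfl ht 1, by simp [expVal_prep hq ht, htv]⟩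

lemma mk_expansions_div (hq : 1 < q) (y : ℝ) :
    Cardinal.mk (expansions q (y / q)) =
      Cardinal.mk (expansions q y) + Cardinal.mk (expansions q (y - 1)) := by
  have hdisj : Disjoint (prep 0 1 '' expansions q y) (prep 1 1 '' expansions q (y - 1)) := by
    rw [Set.disjoint_left]
    rintro _ ⟨a, -, rfl⟩ ⟨b, -, hb⟩
    simpa [prep] using congrFun hb 0
  rw [expansions_div_eq_union hq, Cardinal.mk_union_of_disjoint hdisj,
    Cardinal.mk_image_eq (prep_injective 0 1), Cardinal.mk_image_eq (prep_injective 1 1)]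

lemma mk_expansions_div_of_lt_one (hq : 1 < q) {y : ℝ} (hy : y < 1) :
    Cardinal.mk (expansions q (y / q)) = Cardinal.mk (expansions q y) := by
  rw [mk_expansions_div hq, expansions_eq_empty_of_neg (y := y - 1) (by linarith) (by linarith)]
  simp

end Expansions

section Greedy

variable {q y : ℝ}

noncomputable def greedyDigit (q r : ℝ) : ℕ := if 1 ≤ q * r then 1 else 0

noncomputable def greedyRem (q y : ℝ) : ℕ → ℝ
  | 0 => y
  | n + 1 => q * greedyRem q y n - greedyDigit q (greedyRem q y n)

lemma greedyDigit_le_one (r : ℝ) : greedyDigit q r ≤ 1 := by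
  unfold greedyDigit
  split_ifs <;> norm_num

lemma greedyRem_mem_Icc (hq : 1 < q) (hq2 : q ≤ 2) (hy : y ∈ Set.Icc 0 (1 / (q - 1)))
    (n : ℕ) : greedyRem q y n ∈ Set.Icc 0 (1 / (q - 1)) := by
  induction n with
  | zero => exact hy
  | succ n ih =>
    obtain ⟨h0, h1⟩ := ih
    have hq1 : 0 < q - 1 := by linarith
    have hmul : q * greedyRem q y n ≤ q / (q - 1) := by
      calc q * greedyRem q y n ≤ q * (1 / (q - 1)) := by gcongr
        _ = q / (q - 1) := mul_one_div q (q - 1)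
    have hone : 1 ≤ 1 / (q - 1) := by rw [le_div_iff₀ hq1]; linarith
    have hsub : q / (q - 1) - 1 = 1 / (q - 1) := by field_simp; ring
    simp only [greedyRem, greedyDigit]
    split_ifs with h
    · constructor <;> push_cast <;> linarith
    · constructor <;> push_cast <;> nlinarith

lemma sum_greedyDigit (hq : 1 < q) (n : ℕ) :
    ∑ i ∈ Finset.range n, (greedyDigit q (greedyRem q y i) : ℝ) / q ^ (i + 1) =
      y - greedyRem q y n / q ^ n := by
  have hq0 : q ≠ 0 := by positivity
  induction n with
  | zero => simp [greedyRem]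
  | succ n ih =>
    rw [Finset.sum_range_succ, ih, greedyRem]
    field_simp
    ring

lemma expansions_nonempty (hq : 1 < q) (hq2 : q ≤ 2) (hy : y ∈ Set.Icc 0 (1 / (q - 1))) :
    (expansions q y).Nonempty := by
  refine ⟨fun i => greedyDigit q (greedyRem q y i), fun i => greedyDigit_le_one _, ?_⟩
  have hrem : Filter.Tendsto (fun n => greedyRem q y n / q ^ n) Filter.atTop (nhds 0) := by
    have hgeom :
        Filter.Tendsto (fun n : ℕ => 1 / (q - 1) * (1 / q) ^ n) Filter.atTop (nhds 0) := by
      simpa using (tendsto_pow_atTop_nhds_zero_of_lt_one (by positivity)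
        ((div_lt_one (by linarith)).2 hq)).const_mul (1 / (q - 1))
    refine squeeze_zero (fun n => ?_) (fun n => ?_) hgeom
    · exact div_nonneg (greedyRem_mem_Icc hq hq2 hy n).1 (by positivity)
    · rw [div_pow, one_pow, mul_one_div]
      gcongr
      exact (greedyRem_mem_Icc hq hq2 hy n).2
  refine ((summable_digits hq fun i => greedyDigit_le_one _).hasSum_iff_tendsto_nat.2 ?_).tsum_eq
  simp only [sum_greedyDigit hq]
  simpa using (tendsto_const_nhds (x := y)).sub hrem

end Greedy

lemma Cardinal.eq_zero_of_add_eq_self {a b : Cardinal} (hb : b < Cardinal.aleph0)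
    (h : a + b = b) : a = 0 :=
  (Cardinal.add_eq_right_iff.1 h).resolve_left fun h' =>
    ((le_max_left _ _).trans h').not_gt hb

lemma List.eq_or_of_getD (w : List ℕ) (hstart : w.getD 0 0 = 0 ∧ w.getD 1 0 = 0)
    (hend : w.getD (w.length - 2) 0 = 0 ∧ w.getD (w.length - 1) 0 = 1) :
    w = [0, 0, 1] ∨ ∃ v, w = 0 :: 0 :: (v ++ [0, 1]) := by
  match w, hstart, hend with
  | [], _, hend => simp at hend
  | [_], _, hend => simp at hend; omega
  | a :: b :: t, hstart, hend =>
    simp only [List.getD_cons_zero, List.getD_cons_succ] at hstart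
    obtain ⟨rfl, rfl⟩ := hstart
    rcases List.eq_nil_or_concat t with rfl | ⟨t', c, rfl⟩
    · simp at hend
    rcases List.eq_nil_or_concat t' with rfl | ⟨v, d, rfl⟩
    · simp_all
    · simp [List.getD_eq_getElem?_getD] at hend
      simp [hend]

section QuarticRoot

variable {q : ℝ}

lemma expVal_eps_zero (hq : 1 < q) : expVal q (eps 0) = q / (q ^ 2 - 1) := by
  have h := congrArg (expVal q) eps_zero_eq_prep
  rw [expVal_prep hq (prep_le_one zero_le_one eps_zero_le_one 1), expVal_prep_zero] at h
  have : q ^ 2 - 1 ≠ 0 := by nlinarith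
  rw [eq_div_iff this]
  field_simp at h
  push_cast at h
  linarith

lemma expVal_zero_one_eps_zero_eq (hq : 1 < q) (hr : q ^ 4 = 2 * q ^ 2 + q + 1) :
    expVal q (seqCat [0, 1] (eps 0)) = expVal q (prep 1 1 (prep 0 4 (eps 0))) := by
  have : q ^ 2 - 1 ≠ 0 := by nlinarith
  simp only [seqCat_cons, seqCat_nil, expVal_prep_zero,
    expVal_prep hq eps_zero_le_one, expVal_prep hq (prep_le_one zero_le_one eps_zero_le_one 4),
    expVal_eps_zero hq]
  field_simp
  linear_combination (1 - q) * hr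

lemma two_le_mk_expansions_seqCat_zero_one (hq : 1 < q) (hr : q ^ 4 = 2 * q ^ 2 + q + 1) {v : List ℕ}
    (hv : ∀ s ∈ v, s ≤ 1) :
    2 ≤ Cardinal.mk (expansions q (expVal q (seqCat v (seqCat [0, 1] (eps 0))))) := by
  have hζ : ∀ i, seqCat [0, 1] (eps 0) i ≤ 1 := seqCat_le_one (by simp) eps_zero_le_one
  have hζ' : ∀ i, prep 1 1 (prep 0 4 (eps 0)) i ≤ 1 :=
    prep_le_one le_rfl (prep_le_one zero_le_one eps_zero_le_one 4) 1
  have hne : seqCat v (seqCat [0, 1] (eps 0)) ≠ seqCat v (prep 1 1 (prep 0 4 (eps 0))) := by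
    intro h
    simpa [seqCat_apply_length, prep] using congrFun h v.length
  rw [Cardinal.two_le_iff]
  refine ⟨⟨_, seqCat_le_one hv hζ, rfl⟩, ⟨_, seqCat_le_one hv hζ', ?_⟩,
    Subtype.coe_ne_coe.1 hne⟩
  exact expVal_seqCat_congr hq hv hζ' hζ (expVal_zero_one_eps_zero_eq hq hr).symm

lemma expVal_zero_zero_seqCat_lt (hq : 1 < q) (hq2 : q < 2) (hr : q ^ 4 = 2 * q ^ 2 + q + 1)
    {v : List ℕ} (hv : ∀ s ∈ v, s ≤ 1)
    (htwo :
      Cardinal.mk (expansions q (expVal q (seqCat (0 :: 0 :: v) (seqCat [0, 1] (eps 0))))) = 2) :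
    expVal q (seqCat (0 :: 0 :: v) (seqCat [0, 1] (eps 0))) < 1 / q ^ 2 := by
  have hdig : ∀ i, seqCat v (seqCat [0, 1] (eps 0)) i ≤ 1 :=
    seqCat_le_one hv (seqCat_le_one (by simp) eps_zero_le_one)
  set z := expVal q (seqCat v (seqCat [0, 1] (eps 0)))
  have hx : expVal q (seqCat (0 :: 0 :: v) (seqCat [0, 1] (eps 0))) = z / q / q := by
    simp [expVal_prep_zero, z]
  have hzq : z / q < 1 := by
    rw [div_lt_one (by positivity)]
    calc z ≤ 1 / (q - 1) := expVal_le hq hdig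
      _ < q := by rw [div_lt_iff₀ (by linarith)]; nlinarith
  have hsplit : Cardinal.mk (expansions q z) + Cardinal.mk (expansions q (z - 1)) = 2 := by
    rw [← mk_expansions_div hq, ← mk_expansions_div_of_lt_one hq hzq, ← hx, htwo]
  have htwo_z : Cardinal.mk (expansions q z) = 2 :=
    le_antisymm (hsplit ▸ le_self_add) (two_le_mk_expansions_seqCat_zero_one hq hr hv)
  have hempty : expansions q (z - 1) = ∅ := Cardinal.mk_set_eq_zero_iff.1 <|
    Cardinal.eq_zero_of_add_eq_self Cardinal.ofNat_lt_aleph0 (by rwa [htwo_z, add_comm] at hsplit)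
  have hz : z < 1 := by
    by_contra! hz
    exact (expansions_nonempty hq hq2.le
      ⟨by linarith, by linarith [expVal_le hq hdig]⟩).ne_empty hempty
  rw [hx, div_div, ← sq]
  gcongr

lemma one_add_expVal_seqCat_le (hq : 1 < q) (hq2 : q < 2) (hr : q ^ 4 = 2 * q ^ 2 + q + 1)
    {w : List ℕ} (hw : ∀ s ∈ w, s ≤ 1) (hstart : w.getD 0 0 = 0 ∧ w.getD 1 0 = 0)
    (hend : w.getD (w.length - 2) 0 = 0 ∧ w.getD (w.length - 1) 0 = 1)
    (htwo : Cardinal.mk (expansions q (expVal q (seqCat w (eps 0)))) = 2) :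
    1 + expVal q (seqCat w (eps 0)) ≤ 1 / (q - 1) := by
  have hq1 : 0 < q - 1 := by linarith
  rcases List.eq_or_of_getD w hstart hend with rfl | ⟨v, rfl⟩
  · have h : 0 < q ^ 2 - 1 := by nlinarith
    simp only [seqCat_cons, seqCat_nil, expVal_prep_zero, expVal_prep hq eps_zero_le_one,
      expVal_eps_zero hq]
    rw [le_div_iff₀ hq1]
    field_simp
    push_cast
    nlinarith [mul_pos hq1 (sub_pos.2 hq2), congrArg (fun t => (q - 1) ^ 2 * t) hr]
  · have hv : ∀ s ∈ v, s ≤ 1 := fun s hs => hw s (by simp [hs])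
    have hcat : seqCat (0 :: 0 :: (v ++ [0, 1])) (eps 0) =
        seqCat (0 :: 0 :: v) (seqCat [0, 1] (eps 0)) := by
      rw [← seqCat_append]
      rfl
    rw [hcat] at htwo ⊢
    have hlt := expVal_zero_zero_seqCat_lt hq hq2 hr hv htwo
    have hsq : 1 + 1 / q ^ 2 ≤ 1 / (q - 1) := by
      rw [le_div_iff₀ hq1]
      field_simp
      nlinarith
    linarith

end QuarticRoot

theorem stmt10_general (q2 : ℝ) (hq2 : q2 ∈ Set.Ioo (1 : ℝ) 2)
    (hq2r : q2 ^ 4 = 2 * q2 ^ 2 + q2 + 1)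
    (n : ℕ) (w : List ℕ) (hlen : w.length = n) (hdig : ∀ s ∈ w, s ≤ 1)
    (hend : w.getD (n - 2) 0 = 0 ∧ w.getD (n - 1) 0 = 1)
    (hstart : w.getD 0 0 = 0 ∧ w.getD 1 0 = 0)
    (htwo : Cardinal.mk ↥(expansions q2 (expVal q2 (seqCat w (eps 0)))) = 2) :
    Cardinal.mk ↥(expansions q2 (expVal q2 (prep 0 1 (seqCat w (eps 0))))) = 2 ∧
      Cardinal.mk ↥(expansions q2 (expVal q2 (prep 1 1 (seqCat w (eps 0))))) ≠ 2 := by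
  obtain ⟨hq, hq2⟩ := hq2
  subst hlen
  have hη : ∀ i, seqCat w (eps 0) i ≤ 1 := seqCat_le_one hdig eps_zero_le_one
  have hbound := one_add_expVal_seqCat_le hq hq2 hq2r hdig hstart hend htwo
  have hx1 : expVal q2 (seqCat w (eps 0)) < 1 := by
    have : 1 / (q2 - 1) < 2 := by
      rw [div_lt_iff₀ (by linarith)]
      nlinarith [sq_nonneg (q2 ^ 2 - 3), sq_nonneg (q2 - 1.7)]
    linarith
  constructor
  · rw [expVal_prep hq hη, Nat.cast_zero, zero_add, mk_expansions_div_of_lt_one hq hx1, htwo]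
  · rw [expVal_prep hq hη, Nat.cast_one, mk_expansions_div hq, add_sub_cancel_left, htwo]
    intro h
    have hempty := Cardinal.mk_set_eq_zero_iff.1 <|
      Cardinal.eq_zero_of_add_eq_self Cardinal.ofNat_lt_aleph0 h
    have hx0 := expVal_nonneg (by linarith : 0 ≤ q2) (seqCat w (eps 0))
    exact (expansions_nonempty hq hq2.le ⟨by linarith, hbound⟩).ne_empty hempty

/-- let `η_n = d₁⋯d_n(10)^∞` with `n ≥ 2`, `d_{n-1}d_n = 01`, and suppose
`(η_n)_{q₂}` has exactly two `q₂`-expansions. If `d₁d₂ = 00` then `(0η_n)_{q₂}` has exactly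
two `q₂`-expansions while `(1η_n)_{q₂}` does not. -/
theorem stmt10 (q2 : ℝ) (hq2 : q2 ∈ Set.Ioo (1 : ℝ) 2)
    (hq2r : q2 ^ 4 = 2 * q2 ^ 2 + q2 + 1)
    (n : ℕ) (hn : 2 ≤ n) (w : List ℕ) (hlen : w.length = n) (hdig : ∀ s ∈ w, s ≤ 1)
    (hend : w.getD (n - 2) 0 = 0 ∧ w.getD (n - 1) 0 = 1)
    (hstart : w.getD 0 0 = 0 ∧ w.getD 1 0 = 0)
    (htwo : Cardinal.mk ↥(expansions q2 (expVal q2 (seqCat w (eps 0)))) = 2) :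
    Cardinal.mk ↥(expansions q2 (expVal q2 (prep 0 1 (seqCat w (eps 0))))) = 2 ∧
      Cardinal.mk ↥(expansions q2 (expVal q2 (prep 1 1 (seqCat w (eps 0))))) ≠ 2 :=
  stmt10_general q2 hq2 hq2r n w hlen hdig hend hstart htwo
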